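/- arXiv:1808.06563 — 3 statements merged into one kernel-verified Lean document; each statement's English description precedes it below -/
import Mathlib

section
/- For 0 < β ≤ 1, the generalized Poisson probabilities P(N(t)=k) = t^{kβ} E_β^{(k)}(-t^β)/k! sum to 1 over k = 0, 1, 2, ..., for every t ≥ 0. -/
open Filter Real Topology

noncomputable def mittagLeffler (β x : ℝ) : ℝ :=
  ∑' n : ℕ, x ^ n / Real.Gamma (β * n + 1)

/-- Log-convexity consequence: `Γ s / Γ (s+β) ≤ (s+β-1) ^ (-β)` for `s ≥ 1`, `0 < β ≤ 1`. -/
lemma gamma_ratio_le {β s : ℝ} (hβ0 : 0 < β) (hβ1 : β ≤ 1) (hs : 1 ≤ s) :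
    Real.Gamma s / Real.Gamma (s + β) ≤ (s + β - 1) ^ (-β) := by
  have hs0 : 0 < s := lt_of_lt_of_le one_pos hs
  have hx : 0 < s + β - 1 := by linarith
  have hG : 0 < Real.Gamma (s + β) := Real.Gamma_pos_of_pos (by linarith)
  rw [div_le_iff₀ hG]
  rcases eq_or_lt_of_le hβ1 with h1 | h1
  · subst h1
    have : Real.Gamma (s + 1) = s * Real.Gamma s := Real.Gamma_add_one hs0.ne'
    rw [this]
    have hGs : 0 < Real.Gamma s := Real.Gamma_pos_of_pos hs0
    rw [show s + 1 - 1 = s by ring, Real.rpow_neg_one]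
    rw [← mul_assoc, inv_mul_cancel₀ hs0.ne', one_mul]
  · -- 0 < β < 1
    have key := Real.Gamma_mul_add_mul_le_rpow_Gamma_mul_rpow_Gamma
      (s := s + β - 1) (t := s + β) (a := β) (b := 1 - β) hx (by linarith) hβ0
      (by linarith) (by ring)
    have harg : β * (s + β - 1) + (1 - β) * (s + β) = s := by ring
    rw [harg] at key
    have hrec : Real.Gamma (s + β - 1) = Real.Gamma (s + β) / (s + β - 1) := by
      have := Real.Gamma_add_one hx.ne'
      rw [show s + β - 1 + 1 = s + β by ring] at this
      rw [this]; field_simp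
    rw [hrec] at key
    refine key.trans_eq ?_
    rw [Real.div_rpow hG.le hx.le, div_mul_eq_mul_div, ← Real.rpow_add hG,
      show β + (1 - β) = 1 by ring, Real.rpow_one, div_eq_inv_mul,
      Real.rpow_neg hx.le]

lemma ratio_tendsto {β : ℝ} (hβ0 : 0 < β) (hβ1 : β ≤ 1) :
    Tendsto (fun n : ℕ => ‖(Real.Gamma (β * (n + 1 : ℕ) + 1))⁻¹‖ /
      ‖(Real.Gamma (β * n + 1))⁻¹‖) atTop (𝓝 0) := by
  have hGpos : ∀ n : ℕ, 0 < Real.Gamma (β * n + 1) := fun n =>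
    Real.Gamma_pos_of_pos (by positivity)
  have hbound : ∀ n : ℕ, ‖(Real.Gamma (β * (n + 1 : ℕ) + 1))⁻¹‖ /
      ‖(Real.Gamma (β * n + 1))⁻¹‖ ≤ (β * (n + 1)) ^ (-β) := by
    intro n
    have h1 := hGpos n
    have h2 := hGpos (n + 1)
    rw [Real.norm_eq_abs, Real.norm_eq_abs, abs_of_pos (inv_pos.2 h2),
      abs_of_pos (inv_pos.2 h1), div_eq_mul_inv, inv_inv, mul_comm, ← div_eq_mul_inv]
    have hs : (1 : ℝ) ≤ β * n + 1 := by
      have := mul_nonneg hβ0.le (Nat.cast_nonneg (α := ℝ) n); linarith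
    have h := gamma_ratio_le hβ0 hβ1 hs
    have e1 : β * ((n : ℝ) + 1) = β * ↑n + 1 + β - 1 := by ring
    have e2 : β * ((n + 1 : ℕ) : ℝ) + 1 = β * ↑n + 1 + β := by push_cast; ring
    rw [e2, e1]
    exact h
  have hnonneg : ∀ n : ℕ, 0 ≤ ‖(Real.Gamma (β * (n + 1 : ℕ) + 1))⁻¹‖ /
      ‖(Real.Gamma (β * n + 1))⁻¹‖ := fun n => by positivity
  have htop : Tendsto (fun n : ℕ => β * ((n : ℝ) + 1)) atTop atTop := by
    apply Tendsto.const_mul_atTop hβ0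
    exact tendsto_atTop_add_const_right _ 1 tendsto_natCast_atTop_atTop
  have hlim : Tendsto (fun n : ℕ => (β * ((n : ℝ) + 1)) ^ (-β)) atTop (𝓝 0) :=
    (tendsto_rpow_neg_atTop hβ0).comp htop
  exact squeeze_zero hnonneg hbound hlim

theorem fractional_poisson_sums_to_one (β : ℝ) (hβ0 : 0 < β) (hβ1 : β ≤ 1)
    (t : ℝ) (ht : 0 ≤ t) :
    ∑' k : ℕ, t ^ (β * k) * iteratedDeriv k (mittagLeffler β) (-(t ^ β))
        / (Nat.factorial k : ℝ) = 1 := by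
  classical
  set c : ℕ → ℝ := fun n => (Real.Gamma (β * n + 1))⁻¹ with hc
  set p := FormalMultilinearSeries.ofScalars ℝ c with hp
  have hGpos : ∀ n : ℕ, 0 < Real.Gamma (β * n + 1) := fun n =>
    Real.Gamma_pos_of_pos (by positivity)
  have hradius : p.radius = ⊤ := by
    apply FormalMultilinearSeries.ofScalars_radius_eq_top_of_tendsto
    · exact Eventually.of_forall fun n => inv_ne_zero (hGpos n).ne'
    · exact ratio_tendsto hβ0 hβ1
  have hsum_eq : mittagLeffler β = p.sum := by
    funext x
    refine tsum_congr fun n => ?_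
    rw [hp, FormalMultilinearSeries.ofScalars_apply_eq]
    rw [smul_eq_mul, div_eq_inv_mul]
  have h0 : HasFPowerSeriesOnBall (mittagLeffler β) p 0 ⊤ := by
    rw [hsum_eq, ← hradius]
    exact p.hasFPowerSeriesOnBall (by rw [hradius]; exact ENNReal.zero_lt_top)
  set y : ℝ := t ^ β with hy
  have hchange := h0.changeOrigin (y := -y) (by simp)
  rw [zero_add, ENNReal.top_sub_coe] at hchange
  have hs := hchange.hasSum_iteratedFDeriv (y := y)
    (by simp [EMetric.mem_ball])
  rw [neg_add_cancel] at hs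
  have hML0 : mittagLeffler β 0 = 1 := by
    rw [mittagLeffler]
    rw [tsum_eq_single 0 (fun n hn => by
      rw [zero_pow hn, zero_div])]
    norm_num
  rw [hML0] at hs
  have hterm : ∀ k : ℕ,
      t ^ (β * k) * iteratedDeriv k (mittagLeffler β) (-(t ^ β)) / (Nat.factorial k : ℝ)
        = ((Nat.factorial k : ℝ))⁻¹ •
            iteratedFDeriv ℝ k (mittagLeffler β) (-y) (fun _ => y) := by
    intro k
    rw [iteratedFDeriv_apply_eq_iteratedDeriv_mul_prod]
    have hyk : t ^ (β * k) = y ^ k := by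
      rw [hy, ← Real.rpow_natCast (t ^ β) k, ← Real.rpow_mul ht]
    simp only [Finset.prod_const, Finset.card_univ, Fintype.card_fin, smul_eq_mul]
    rw [hyk, hy]
    ring
  calc ∑' k : ℕ, t ^ (β * k) * iteratedDeriv k (mittagLeffler β) (-(t ^ β))
      / (Nat.factorial k : ℝ)
      = ∑' k : ℕ, ((Nat.factorial k : ℝ))⁻¹ •
          iteratedFDeriv ℝ k (mittagLeffler β) (-y) (fun _ => y) := tsum_congr hterm
    _ = 1 := hs.tsum_eq
end

section
/- Suppose f̃(s) = 1 - μ s^β + o(s^β) as s → 0+ with μ > 0 and 0 < β ≤ 1. Under the scaling q = μ τ^β, the Laplace transform of the rescaled thinned density, g̃_{q,τ}(s) = q f̃(τs)/(1 - (1-q) f̃(τs)), converges pointwise for each fixed s > 0 to 1/(1+s^β) as τ → 0+. -/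
/-!
Put `φ(τ) = f̃(τ s)` and `q = μ τ^β`. Dividing numerator and denominator by `q` gives
`q φ / (1 - (1 - q) φ) = φ / ((1 - φ)/q + φ)`. The expansion of `f̃` at `0+` says
`(1 - f̃(x))/x^β → μ`, so after rescaling `(1 - φ(τ))/τ^β → μ s^β`; hence `φ → 1` and
`(1 - φ)/q → s^β`, and the quotient tends to `1/(1 + s^β)`.
-/

open MeasureTheory Filter

noncomputable def laplace (f : ℝ → ℝ) (s : ℝ) : ℝ :=
  ∫ t in Set.Ioi (0:ℝ), Real.exp (-s * t) * f t

open Topology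

theorem tendsto_thinning_of_tendsto_one_sub_div {α : Type*} {l : Filter α} {q φ : α → ℝ} {c : ℝ}
    (hc : 1 + c ≠ 0) (hq : ∀ᶠ x in l, q x ≠ 0) (hφ : Tendsto φ l (𝓝 1))
    (hrate : Tendsto (fun x => (1 - φ x) / q x) l (𝓝 c)) :
    Tendsto (fun x => q x * φ x / (1 - (1 - q x) * φ x)) l (𝓝 (1 / (1 + c))) := by
  have hlim : Tendsto (fun x => φ x / ((1 - φ x) / q x + φ x)) l (𝓝 (1 / (c + 1))) :=
    hφ.div (hrate.add hφ) (by rwa [add_comm])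
  rw [add_comm] at hlim
  refine hlim.congr' ?_
  filter_upwards [hq] with x hqx
  rw [div_add' _ _ _ hqx, div_div_eq_mul_div, mul_comm]
  ring_nf

theorem tendsto_one_sub_div_rpow_of_expansion {g : ℝ → ℝ} {μ β : ℝ}
    (h : Tendsto (fun x => (g x - (1 - μ * x ^ β)) / x ^ β) (𝓝[>] 0) (𝓝 0)) :
    Tendsto (fun x => (1 - g x) / x ^ β) (𝓝[>] 0) (𝓝 μ) := by
  have hlim := (tendsto_const_nhds (x := μ)).sub h
  rw [sub_zero] at hlim
  refine hlim.congr' ?_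
  filter_upwards [self_mem_nhdsWithin] with x hx
  have hxβ : x ^ β ≠ 0 := (Real.rpow_pos_of_pos hx β).ne'
  field_simp
  ring

theorem tendsto_one_of_tendsto_one_sub_div {α : Type*} {l : Filter α} {g r : α → ℝ} {c : ℝ}
    (hr : Tendsto r l (𝓝 0)) (hr0 : ∀ᶠ x in l, r x ≠ 0)
    (h : Tendsto (fun x => (1 - g x) / r x) l (𝓝 c)) :
    Tendsto g l (𝓝 1) := by
  have hlim := (tendsto_const_nhds (x := (1:ℝ))).sub (hr.mul h)
  rw [zero_mul, sub_zero] at hlim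
  refine hlim.congr' ?_
  filter_upwards [hr0] with x hx
  field_simp
  ring

theorem Filter.Tendsto.one_sub_comp_mul_const_div_rpow {g : ℝ → ℝ} {μ β s : ℝ} (hs : 0 < s)
    (h : Tendsto (fun x => (1 - g x) / x ^ β) (𝓝[>] 0) (𝓝 μ)) :
    Tendsto (fun τ => (1 - g (τ * s)) / τ ^ β) (𝓝[>] 0) (𝓝 (μ * s ^ β)) := by
  have hscale : Tendsto (· * s) (𝓝[>] (0:ℝ)) (𝓝[>] 0) := by
    simpa only [mul_comm _ s, comap_mulLeft_nhdsGT_zero hs] using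
      tendsto_comap (f := (s * ·)) (x := 𝓝[>] (0:ℝ))
  refine ((h.comp hscale).mul_const (s ^ β)).congr' ?_
  filter_upwards [self_mem_nhdsWithin] with τ hτ
  have hτβ : τ ^ β ≠ 0 := (Real.rpow_pos_of_pos hτ β).ne'
  have hsβ : s ^ β ≠ 0 := (Real.rpow_pos_of_pos hs β).ne'
  simp only [Function.comp_apply, Real.mul_rpow hτ.le hs.le]
  field_simp

theorem thinning_limit_mittagLeffler_general (f : ℝ → ℝ)
    (μ β : ℝ) (hμ : 0 < μ) (hβ0 : 0 < β)
    (hasymp : Tendsto (fun s : ℝ => (laplace f s - (1 - μ * s ^ β)) / s ^ β)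
      (nhdsWithin 0 (Set.Ioi 0)) (nhds 0))
    (s : ℝ) (hs : 0 < s) :
    Tendsto (fun τ : ℝ =>
        (μ * τ ^ β) * laplace f (τ * s)
          / (1 - (1 - μ * τ ^ β) * laplace f (τ * s)))
      (nhdsWithin 0 (Set.Ioi 0)) (nhds (1 / (1 + s ^ β))) := by
  have hτβ_pos : ∀ᶠ τ in 𝓝[>] (0:ℝ), 0 < τ ^ β := by
    filter_upwards [self_mem_nhdsWithin] with τ hτ using Real.rpow_pos_of_pos hτ β
  have hτβ_lim : Tendsto (fun τ : ℝ => τ ^ β) (𝓝[>] 0) (𝓝 0) := by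
    simpa [Real.zero_rpow hβ0.ne'] using
      ((Real.continuousAt_rpow_const 0 β (Or.inr hβ0.le)).tendsto).mono_left nhdsWithin_le_nhds
  have hrate := (tendsto_one_sub_div_rpow_of_expansion hasymp).one_sub_comp_mul_const_div_rpow hs
  have hφ := tendsto_one_of_tendsto_one_sub_div hτβ_lim (hτβ_pos.mono fun _ h => h.ne') hrate
  refine tendsto_thinning_of_tendsto_one_sub_div (by positivity)
    (hτβ_pos.mono fun _ h => (mul_pos hμ h).ne') hφ ?_
  have hq_rate := hrate.div_const μ
  rw [mul_div_right_comm, div_self hμ.ne', one_mul] at hq_rate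
  refine hq_rate.congr fun τ => ?_
  rw [div_div, mul_comm (τ ^ β)]

/-- Under the scaling `q = μ τ^β`, the Laplace transform of the rescaled thinned density
converges, as `τ → 0+`, to `1/(1+s^β)` for each fixed `s > 0`. -/
theorem thinning_limit_mittagLeffler (f : ℝ → ℝ)
    (hf_nonneg : ∀ t, 0 ≤ t → 0 ≤ f t)
    (hf_int : IntegrableOn f (Set.Ioi 0))
    (hf_density : ∫ t in Set.Ioi (0:ℝ), f t = 1)
    (μ β : ℝ) (hμ : 0 < μ) (hβ0 : 0 < β) (hβ1 : β ≤ 1)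
    (hasymp : Tendsto (fun s : ℝ => (laplace f s - (1 - μ * s ^ β)) / s ^ β)
      (nhdsWithin 0 (Set.Ioi 0)) (nhds 0))
    (s : ℝ) (hs : 0 < s) :
    Tendsto (fun τ : ℝ =>
        (μ * τ ^ β) * laplace f (τ * s)
          / (1 - (1 - μ * τ ^ β) * laplace f (τ * s)))
      (nhdsWithin 0 (Set.Ioi 0)) (nhds (1 / (1 + s ^ β))) :=
  thinning_limit_mittagLeffler_general f μ β hμ hβ0 hasymp s hs
end

section
/- If Ψ(t) = ∫_t^∞ f(t')dt' ~ (c/β) t^{-β} as t → ∞ with 0 < β < 1 and c > 0, then the Laplace transform of f satisfies f̃(s) = 1 - μ s^β + o(s^β) as s → 0+, where μ = cπ/(Γ(β+1) sin(βπ)). -/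
/-! Let `ν` be the law with density `f`. The layer-cake formula gives
`1 - f̃(s) = s ∫₀^∞ e^{-st} Ψ(t) dt`, and the substitution `u = st` turns this into
`s^β ∫₀^∞ e^{-u} u^{-β} φ(u/s) du` with `φ(t) = t^β Ψ(t)`, which is bounded and tends to `c/β`.
Dominated convergence then gives `(1 - f̃(s)) / s^β → Γ(1-β) c/β`, and this limit is `μ` by the
reflection formula `Γ(β) Γ(1-β) = π / sin(πβ)`. -/

open MeasureTheory Filter

open Set Real Topology

theorem measureReal_withDensity_ofReal {α : Type*} [MeasurableSpace α] {μ : Measure α}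
    {f : α → ℝ} {s : Set α} (hs : MeasurableSet s) (hf : IntegrableOn f s μ)
    (hf_nn : 0 ≤ᵐ[μ.restrict s] f) :
    (μ.withDensity fun x => ENNReal.ofReal (f x)).real s = ∫ x in s, f x ∂μ := by
  rw [measureReal_def, withDensity_apply _ hs, ← ofReal_integral_eq_lintegral_ofReal hf hf_nn,
    ENNReal.toReal_ofReal (integral_nonneg_of_ae hf_nn)]

theorem integral_withDensity_ofReal {α : Type*} [MeasurableSpace α] {μ : Measure α}
    {f : α → ℝ} (hf : AEMeasurable f μ) (hf_nn : 0 ≤ᵐ[μ] f) (g : α → ℝ) :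
    ∫ x, g x ∂(μ.withDensity fun x => ENNReal.ofReal (f x)) = ∫ x, f x * g x ∂μ := by
  rw [integral_withDensity_eq_integral_toReal_smul₀ hf.ennreal_ofReal
    (ae_of_all _ fun _ => ENNReal.ofReal_lt_top)]
  refine integral_congr_ae ?_
  filter_upwards [hf_nn] with x hx
  rw [ENNReal.toReal_ofReal hx, smul_eq_mul]

theorem integral_mul_exp_neg_mul (s x : ℝ) :
    ∫ t in 0..x, s * exp (-s * t) = 1 - exp (-s * x) := by
  have hderiv (t : ℝ) : HasDerivAt (fun t => -exp (-s * t)) (s * exp (-s * t)) t :=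
    ((hasDerivAt_id t).const_mul (-s)).exp.neg.congr_deriv (by simp; ring)
  rw [intervalIntegral.integral_eq_sub_of_hasDerivAt (fun t _ => hderiv t)
    ((by fun_prop : Continuous fun t => s * exp (-s * t)).intervalIntegrable _ _)]
  simp only [mul_zero, exp_zero]
  ring

theorem measurable_measureReal_Ioi (ν : Measure ℝ) [IsFiniteMeasure ν] :
    Measurable fun t => ν.real (Ioi t) :=
  Antitone.measurable fun _ _ hab => measureReal_mono (Ioi_subset_Ioi hab)

theorem one_sub_integral_exp_neg_mul_eq_mul_integral_tail {ν : Measure ℝ}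
    [IsProbabilityMeasure ν] (hν : ∀ᵐ x ∂ν, 0 ≤ x) {s : ℝ} (hs : 0 ≤ s) :
    1 - ∫ x, exp (-s * x) ∂ν = s * ∫ t in Ioi 0, exp (-s * t) * ν.real (Ioi t) := by
  have hexp_le : ∀ᵐ x ∂ν, exp (-s * x) ≤ 1 := by
    filter_upwards [hν] with x hx
    exact exp_le_one_iff.mpr (by nlinarith)
  have hint : Integrable (fun x => exp (-s * x)) ν :=
    .of_bound (by fun_prop) 1 (by filter_upwards [hexp_le] with x hx; simpa using hx)
  have hlayercake := lintegral_comp_eq_lintegral_meas_lt_mul ν hν aemeasurable_id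
    (g := fun t => s * exp (-s * t))
    (fun _ _ => (by fun_prop : Continuous _).intervalIntegrable _ _)
    (ae_of_all _ fun t => by positivity)
  simp only [integral_mul_exp_neg_mul] at hlayercake
  calc 1 - ∫ x, exp (-s * x) ∂ν = ∫ x, (1 - exp (-s * x)) ∂ν := by
        rw [integral_sub (integrable_const 1) hint, integral_const, probReal_univ, one_smul]
    _ = (∫⁻ x, ENNReal.ofReal (1 - exp (-s * x)) ∂ν).toReal :=
        integral_eq_lintegral_of_nonneg_ae (by filter_upwards [hexp_le] with x hx; simpa using hx)
          (by fun_prop)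
    _ = (∫⁻ t in Ioi 0, ENNReal.ofReal (ν.real (Ioi t) * (s * exp (-s * t)))).toReal := by
        rw [hlayercake]
        congr 1
        refine lintegral_congr fun t => ?_
        rw [ENNReal.ofReal_mul measureReal_nonneg, ofReal_measureReal]
        rfl
    _ = ∫ t in Ioi 0, ν.real (Ioi t) * (s * exp (-s * t)) := by
        refine (integral_eq_lintegral_of_nonneg_ae (ae_of_all _ fun t => by positivity) ?_).symm
        exact ((measurable_measureReal_Ioi ν).mul (by fun_prop)).aestronglyMeasurable
    _ = s * ∫ t in Ioi 0, exp (-s * t) * ν.real (Ioi t) := by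
        rw [← integral_const_mul]; congr with t; ring

theorem setIntegral_exp_neg_mul_rpow_neg_mul_comp_div (F : ℝ → ℝ) (β : ℝ) {s : ℝ} (hs : 0 < s) :
    ∫ u in Ioi 0, exp (-u) * u ^ (-β) * ((u / s) ^ β * F (u / s))
      = s ^ (1 - β) * ∫ t in Ioi 0, exp (-s * t) * F t := by
  have hintegrand : EqOn (fun u => exp (-u) * u ^ (-β) * ((u / s) ^ β * F (u / s)))
      (fun u => (s ^ β)⁻¹ * (exp (-u) * F (u / s))) (Ioi 0) := fun u (hu : 0 < u) => by
    have hu_rpow : u ^ (-β) * u ^ β = 1 := by rw [← rpow_add hu]; simp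
    simp only [div_rpow hu.le hs.le]
    linear_combination (exp (-u) * F (u / s) / s ^ β) * hu_rpow
  have hsubst := integral_comp_mul_left_Ioi' (fun u => exp (-u) * F (u / s)) 0 hs
  simp only [mul_zero, mul_div_cancel_left₀ _ hs.ne', smul_eq_mul, neg_mul] at hsubst ⊢
  rw [setIntegral_congr_fun measurableSet_Ioi hintegrand, integral_const_mul, ← hsubst,
    rpow_sub hs, rpow_one]
  ring

theorem exists_forall_abs_rpow_mul_le_of_tendsto {F : ℝ → ℝ} {β C L : ℝ} (hβ : 0 ≤ β)
    (hF : ∀ t, |F t| ≤ C) (hlim : Tendsto (fun t => t ^ β * F t) atTop (𝓝 L)) :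
    ∃ M, ∀ t > 0, |t ^ β * F t| ≤ M := by
  obtain ⟨T, hT⟩ := eventually_atTop.mp <|
    hlim.abs.eventually (eventually_le_nhds (lt_add_one |L|))
  refine ⟨max (|L| + 1) (T ^ β * C), fun t ht => ?_⟩
  rcases le_total T t with hTt | htT
  · exact le_max_of_le_left (hT t hTt)
  · refine le_max_of_le_right ?_
    rw [abs_mul, abs_of_nonneg (rpow_nonneg ht.le β)]
    exact mul_le_mul (rpow_le_rpow ht.le htT hβ) (hF t) (abs_nonneg _)
      (rpow_nonneg (ht.le.trans htT) β)

theorem tendsto_setIntegral_exp_neg_mul_rpow_neg_mul_comp_div {φ : ℝ → ℝ} {β L M : ℝ}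
    (hβ : β < 1) (hφ_meas : Measurable φ) (hφ_bdd : ∀ t > 0, |φ t| ≤ M)
    (hφ_lim : Tendsto φ atTop (𝓝 L)) :
    Tendsto (fun s => ∫ u in Ioi 0, exp (-u) * u ^ (-β) * φ (u / s)) (𝓝[>] 0)
      (𝓝 (Gamma (1 - β) * L)) := by
  have hkernel : IntegrableOn (fun u => exp (-u) * u ^ (-β)) (Ioi 0) := by
    simpa using GammaIntegral_convergent (sub_pos.mpr hβ)
  have hlimit : ∫ u in Ioi 0, exp (-u) * u ^ (-β) * L = Gamma (1 - β) * L := by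
    rw [integral_mul_const, Gamma_eq_integral (sub_pos.mpr hβ), sub_sub_cancel_left]
  rw [← hlimit]
  refine tendsto_integral_filter_of_dominated_convergence (fun u => M * (exp (-u) * u ^ (-β)))
    (Eventually.of_forall fun s => by fun_prop) ?_ (hkernel.const_mul M) ?_
  · filter_upwards [self_mem_nhdsWithin] with s (hs : 0 < s)
    filter_upwards [ae_restrict_mem measurableSet_Ioi] with u (hu : 0 < u)
    rw [norm_mul, mul_comm M, Real.norm_of_nonneg (by positivity)]
    exact mul_le_mul_of_nonneg_left (hφ_bdd _ (div_pos hu hs)) (by positivity)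
  · filter_upwards [ae_restrict_mem measurableSet_Ioi] with u (hu : 0 < u)
    refine tendsto_const_nhds.mul (hφ_lim.comp ?_)
    exact (tendsto_inv_nhdsGT_zero.const_mul_atTop hu).congr fun s => (div_eq_mul_inv u s).symm

theorem tendsto_one_sub_integral_exp_neg_mul_div_rpow {ν : Measure ℝ} [IsProbabilityMeasure ν]
    (hν : ∀ᵐ x ∂ν, 0 ≤ x) {β L : ℝ} (hβ0 : 0 ≤ β) (hβ1 : β < 1)
    (htail : Tendsto (fun t => t ^ β * ν.real (Ioi t)) atTop (𝓝 L)) :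
    Tendsto (fun s => (1 - ∫ x, exp (-s * x) ∂ν) / s ^ β) (𝓝[>] 0)
      (𝓝 (Gamma (1 - β) * L)) := by
  obtain ⟨M, hM⟩ := exists_forall_abs_rpow_mul_le_of_tendsto hβ0
    (fun t => by rw [abs_of_nonneg measureReal_nonneg]; exact measureReal_le_one) htail
  have hmeas : Measurable fun t => t ^ β * ν.real (Ioi t) :=
    (measurable_id.pow_const β).mul (measurable_measureReal_Ioi ν)
  refine (tendsto_setIntegral_exp_neg_mul_rpow_neg_mul_comp_div hβ1 hmeas hM htail).congr' ?_
  filter_upwards [self_mem_nhdsWithin] with s (hs : 0 < s)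
  refine (setIntegral_exp_neg_mul_rpow_neg_mul_comp_div (fun t => ν.real (Ioi t)) β hs).trans ?_
  rw [one_sub_integral_exp_neg_mul_eq_mul_integral_tail hν hs.le, rpow_sub hs, rpow_one]
  ring

theorem mul_pi_div_Gamma_add_one_mul_sin {β : ℝ} (hβ : 0 < β) (c : ℝ) :
    c * π / (Gamma (β + 1) * sin (β * π)) = Gamma (1 - β) * (c / β) := by
  have hreflection : Gamma (1 - β) = π / sin (π * β) / Gamma β :=
    eq_div_of_mul_eq (Gamma_pos_of_pos hβ).ne' (by rw [mul_comm, Gamma_mul_Gamma_one_sub])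
  rw [Gamma_add_one hβ.ne', hreflection, mul_comm π β]
  ring

theorem tauberian_tail_to_laplace_general (f : ℝ → ℝ)
    (hf_nonneg : ∀ t, 0 ≤ t → 0 ≤ f t)
    (hf_int : IntegrableOn f (Set.Ioi 0))
    (hf_density : ∫ t in Set.Ioi (0:ℝ), f t = 1)
    (Ψ : ℝ → ℝ) (hΨ : ∀ t, Ψ t = ∫ u in Set.Ioi t, f u)
    (β c : ℝ) (hβ0 : 0 < β) (hβ1 : β < 1)
    (htail : Tendsto (fun t : ℝ => t ^ β * Ψ t) atTop (nhds (c / β))) :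
    Tendsto (fun s : ℝ =>
        (laplace f s - (1 - (c * Real.pi / (Real.Gamma (β + 1) * Real.sin (β * Real.pi)))
          * s ^ β)) / s ^ β)
      (nhdsWithin 0 (Set.Ioi 0)) (nhds 0) := by
  set μ := c * π / (Gamma (β + 1) * sin (β * π))
  set ν := (volume.restrict (Ioi 0)).withDensity fun t => ENNReal.ofReal (f t)
  have hf_nn : 0 ≤ᵐ[volume.restrict (Ioi 0)] f := by
    filter_upwards [ae_restrict_mem measurableSet_Ioi] with t ht using hf_nonneg t (le_of_lt ht)
  have : IsProbabilityMeasure ν := ⟨by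
    rw [withDensity_apply _ MeasurableSet.univ, Measure.restrict_univ,
      ← ofReal_integral_eq_lintegral_ofReal hf_int hf_nn, hf_density, ENNReal.ofReal_one]⟩
  have hν : ∀ᵐ x ∂ν, 0 ≤ x := (withDensity_absolutelyContinuous _ _).ae_le <| by
    filter_upwards [ae_restrict_mem measurableSet_Ioi] with x hx using le_of_lt hx
  have htail_ν : ∀ t ≥ 0, ν.real (Ioi t) = Ψ t := fun t ht => by
    rw [measureReal_withDensity_ofReal measurableSet_Ioi hf_int.integrable.restrict
      (ae_restrict_of_ae hf_nn),
      Measure.restrict_restrict measurableSet_Ioi, Ioi_inter_Ioi, max_eq_left ht, hΨ]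
  have hlaplace (s : ℝ) : laplace f s = ∫ x, exp (-s * x) ∂ν := by
    rw [integral_withDensity_ofReal hf_int.aemeasurable hf_nn, laplace]
    simp_rw [mul_comm]
  have hlim := tendsto_one_sub_integral_exp_neg_mul_div_rpow hν hβ0.le hβ1 <|
    htail.congr' <| (eventually_ge_atTop 0).mono fun t ht =>
      congrArg (t ^ β * ·) (htail_ν t ht).symm
  rw [← mul_pi_div_Gamma_add_one_mul_sin hβ0] at hlim
  refine (sub_self μ ▸ tendsto_const_nhds.sub hlim).congr' ?_
  filter_upwards [self_mem_nhdsWithin] with s (hs : 0 < s)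
  rw [hlaplace]
  field_simp [(rpow_pos_of_pos hs β).ne']
  ring

/-- Tauberian relation: a power-law tail `Ψ(t) ~ (c/β) t^{-β}` of the survival function
implies `f̃(s) = 1 - μ s^β + o(s^β)` as `s → 0+`, with `μ = cπ/(Γ(β+1) sin(βπ))`. -/
theorem tauberian_tail_to_laplace (f : ℝ → ℝ)
    (hf_nonneg : ∀ t, 0 ≤ t → 0 ≤ f t)
    (hf_int : IntegrableOn f (Set.Ioi 0))
    (hf_density : ∫ t in Set.Ioi (0:ℝ), f t = 1)
    (Ψ : ℝ → ℝ) (hΨ : ∀ t, Ψ t = ∫ u in Set.Ioi t, f u)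
    (β c : ℝ) (hβ0 : 0 < β) (hβ1 : β < 1) (hc : 0 < c)
    (htail : Tendsto (fun t : ℝ => t ^ β * Ψ t) atTop (nhds (c / β))) :
    Tendsto (fun s : ℝ =>
        (laplace f s - (1 - (c * Real.pi / (Real.Gamma (β + 1) * Real.sin (β * Real.pi)))
          * s ^ β)) / s ^ β)
      (nhdsWithin 0 (Set.Ioi 0)) (nhds 0) :=
  tauberian_tail_to_laplace_general f hf_nonneg hf_int hf_density Ψ hΨ β c hβ0 hβ1 htail
end
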